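/- arXiv:0904.0499 — 6 statements merged into one kernel-verified Lean document; each statement's English description precedes it below -/
import Mathlib

section
/- In the degenerate affine Hecke-Clifford algebra, the square of the intertwiner φ_i = s_i(x_i² - x_{i+1}²) + (x_i + x_{i+1}) - c_i c_{i+1}(x_i - x_{i+1}) equals 2x_i² + 2x_{i+1}² - (x_i² - x_{i+1}²)². -/
/-- A (degenerate) affine Hecke-Clifford algebra structure on a `ℂ`-algebra `A`:
distinguished elements `c 0, …, c (d-1)` (Clifford generators),
`s 0, …, s (d-2)` (Coxeter generators) and `x 0, …, x (d-1)` (polynomial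
generators) satisfying the defining relations of `H_{Cl}^{aff}(d)`. -/
structure AHCA (d : ℕ) (A : Type*) [Ring A] [Algebra ℂ A] where
  c : ℕ → A
  s : ℕ → A
  x : ℕ → A
  c_sq : ∀ i, i < d → c i * c i = -1
  c_anticomm : ∀ i j, i < d → j < d → i ≠ j → c i * c j = -(c j * c i)
  s_sq : ∀ i, i + 1 < d → s i * s i = 1
  braid : ∀ i, i + 2 < d → s i * s (i + 1) * s i = s (i + 1) * s i * s (i + 1)
  s_comm : ∀ i j, i + 1 < d → j + 1 < d → i + 1 < j → s i * s j = s j * s i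
  s_c_left : ∀ i, i + 1 < d → s i * c i = c (i + 1) * s i
  s_c_right : ∀ i, i + 1 < d → s i * c (i + 1) = c i * s i
  s_c_other : ∀ i j, i + 1 < d → j < d → j ≠ i → j ≠ i + 1 → s i * c j = c j * s i
  x_comm : ∀ i j, i < d → j < d → x i * x j = x j * x i
  c_x_same : ∀ i, i < d → c i * x i = -(x i * c i)
  c_x_other : ∀ i j, i < d → j < d → i ≠ j → c i * x j = x j * c i
  s_x_same : ∀ i, i + 1 < d → s i * x i = x (i + 1) * s i - 1 + c i * c (i + 1)
  s_x_other : ∀ i j, i + 1 < d → j < d → j ≠ i → j ≠ i + 1 → s i * x j = x j * s i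

/-- The intertwiner `φ_i = s_i (x_i² - x_{i+1}²) + (x_i + x_{i+1}) - c_i c_{i+1} (x_i - x_{i+1})`. -/
def AHCA.phi {d : ℕ} {A : Type*} [Ring A] [Algebra ℂ A] (H : AHCA d A) (i : ℕ) : A :=
  H.s i * (H.x i ^ 2 - H.x (i + 1) ^ 2) + (H.x i + H.x (i + 1))
    - H.c i * H.c (i + 1) * (H.x i - H.x (i + 1))

/-- Abstract core computation: if `s, K, a, b` satisfy the derived relations of the
degenerate affine Hecke-Clifford algebra (with `K = c_i c_{i+1}`), then the square of
the intertwiner `s (a² - b²) + (a + b) - K (a - b)` equals `2a² + 2b² - (a² - b²)²`. -/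
theorem AHCA.phi_sq_key {A : Type*} [Ring A] (s K a b : A)
    (hs : s * s = 1) (hK : K * K = -1)
    (hba : b * a = a * b)
    (hKa : K * a = -(a * K)) (hKb : K * b = -(b * K))
    (hsa : s * a = b * s - 1 + K) (hsb : s * b = a * s + 1 + K)
    (hsK : s * K = -(K * s)) :
    (s * (a ^ 2 - b ^ 2) + (a + b) - K * (a - b)) *
      (s * (a ^ 2 - b ^ 2) + (a + b) - K * (a - b)) =
      2 * a ^ 2 + 2 * b ^ 2 - (a ^ 2 - b ^ 2) ^ 2 := by
  have hba' : ∀ t : A, b * (a * t) = a * (b * t) := fun t => by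
    rw [← mul_assoc, hba, mul_assoc]
  have hKa' : ∀ t : A, K * (a * t) = -(a * (K * t)) := fun t => by
    rw [← mul_assoc, hKa, neg_mul, mul_assoc]
  have hKb' : ∀ t : A, K * (b * t) = -(b * (K * t)) := fun t => by
    rw [← mul_assoc, hKb, neg_mul, mul_assoc]
  have hsa' : ∀ t : A, s * (a * t) = (b * s - 1 + K) * t := fun t => by
    rw [← mul_assoc, hsa]
  have hsb' : ∀ t : A, s * (b * t) = (a * s + 1 + K) * t := fun t => by
    rw [← mul_assoc, hsb]
  have hsK' : ∀ t : A, s * (K * t) = -(K * (s * t)) := fun t => by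
    rw [← mul_assoc, hsK, neg_mul, mul_assoc]
  have hss' : ∀ t : A, s * (s * t) = t := fun t => by
    rw [← mul_assoc, hs, one_mul]
  have hKK' : ∀ t : A, K * (K * t) = -t := fun t => by
    rw [← mul_assoc, hK, neg_one_mul]
  simp only [pow_two, mul_add, add_mul, mul_sub, sub_mul, mul_neg, neg_mul,
    mul_one, one_mul, mul_assoc, neg_neg, neg_add, neg_sub, sub_eq_add_neg,
    hba', hKa', hKb', hsa', hsb', hsK', hss', hKK', hba, hKa, hKb, hsa, hsb,
    hsK, hs, hK]
  noncomm_ring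

/-- In the degenerate affine Hecke-Clifford algebra,
`φ_i² = 2 x_i² + 2 x_{i+1}² - (x_i² - x_{i+1}²)²`. -/
theorem AHCA.phi_sq {d : ℕ} {A : Type*} [Ring A] [Algebra ℂ A] (H : AHCA d A)
    (i : ℕ) (hi : i + 1 < d) :
    H.phi i * H.phi i =
      2 * H.x i ^ 2 + 2 * H.x (i + 1) ^ 2 - (H.x i ^ 2 - H.x (i + 1) ^ 2) ^ 2 := by
  have hi0 : i < d := Nat.lt_of_succ_lt hi
  have hne : i ≠ i + 1 := Nat.ne_of_lt (Nat.lt_succ_self i)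
  have hne' : i + 1 ≠ i := Ne.symm hne
  set s := H.s i
  set a := H.x i
  set b := H.x (i + 1)
  set c1 := H.c i
  set c2 := H.c (i + 1)
  set K := c1 * c2 with hKdef
  have hs : s * s = 1 := H.s_sq i hi
  have hc21 : c2 * c1 = -(c1 * c2) := H.c_anticomm (i + 1) i hi hi0 hne'
  have hK : K * K = -1 := by
    rw [hKdef]
    calc c1 * c2 * (c1 * c2) = c1 * (c2 * c1) * c2 := by noncomm_ring
      _ = c1 * -(c1 * c2) * c2 := by rw [hc21]
      _ = -(c1 * c1 * (c2 * c2)) := by noncomm_ring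
      _ = -1 := by rw [H.c_sq i hi0, H.c_sq (i + 1) hi]; noncomm_ring
  have hba : b * a = a * b := H.x_comm (i + 1) i hi hi0
  have hKa : K * a = -(a * K) := by
    rw [hKdef, mul_assoc, H.c_x_other (i + 1) i hi hi0 hne', ← mul_assoc,
      H.c_x_same i hi0, neg_mul, mul_assoc]
  have hKb : K * b = -(b * K) := by
    rw [hKdef, mul_assoc, H.c_x_same (i + 1) hi, mul_neg, ← mul_assoc,
      H.c_x_other i (i + 1) hi0 hi hne, mul_assoc]
  have hsa : s * a = b * s - 1 + K := H.s_x_same i hi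
  have hsK : s * K = -(K * s) := by
    rw [hKdef, ← mul_assoc, H.s_c_left i hi, mul_assoc, H.s_c_right i hi,
      ← mul_assoc, hc21, neg_mul]
  have hsb : s * b = a * s + 1 + K := by
    have h1 : s * (s * a) = a := by rw [← mul_assoc, hs, one_mul]
    rw [hsa, mul_add, mul_sub, mul_one, hsK] at h1
    -- h1 : s * (b * s) - s + -(K * s) = a
    have h2 : s * b * s = a + s + K * s := by
      rw [← mul_assoc] at h1
      have := h1
      linear_combination (norm := noncomm_ring) this
    have h3 : s * b * s * s = (a + s + K * s) * s := by rw [h2]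
    rw [mul_assoc, hs, mul_one, add_mul, add_mul, mul_assoc, hs, mul_one] at h3
    rw [h3]
  have := AHCA.phi_sq_key s K a b hs hK hba hKa hKb hsa hsb hsK
  simpa [AHCA.phi, hKdef, sub_eq_add_neg, add_assoc] using this
end

section
/- Let Y be a module over the degenerate affine Hecke-Clifford algebra H(d), and suppose v ∈ Y satisfies x_i·v = √(q(a))·v and x_{i+1}·v = √(q(b))·v for integers a, b, where q(a) = a(a+1). If q(a) ≠ q(b+1) and q(a) ≠ q(b-1), then φ_i²·v ≠ 0, where φ_i is the intertwiner s_i(x_i² - x_{i+1}²) + (x_i + x_{i+1}) - c_i c_{i+1}(x_i - x_{i+1}). -/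
/-- `q a = a (a + 1)`. -/
def qval (a : ℤ) : ℤ := a * (a + 1)

/-- The (complex) square root `√(q a)` of `q a = a(a+1) ≥ 0`. -/
noncomputable def sqrtq (a : ℤ) : ℂ := ((Real.sqrt ((qval a : ℤ) : ℝ) : ℝ) : ℂ)

theorem commute_sq_of_mul_eq_neg {R : Type*} [Ring R] {a b : R} (h : a * b = -(b * a)) :
    Commute a (b ^ 2) := by
  rw [Commute, SemiconjBy, sq, ← mul_assoc, h, neg_mul, mul_assoc, h, mul_neg, neg_neg, mul_assoc]

theorem sq_mul_add_eq_sq_sub_sq {R : Type*} [Ring R] {s d r : R} (hs : s * s = 1)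
    (hsd : s * d = -(d * s) - 2 * r) (hsr : Commute s r) (hdr : Commute d r) :
    (s * d + r) ^ 2 = r ^ 2 - d ^ 2 := by
  linear_combination (norm := noncomm_ring) hsd * (s * d) - d * hs * d + s * hdr.eq + hsr.eq * d

-- The relations between `s = s_i`, `c = c_i c_{i+1}`, `x = x_i` and `y = x_{i+1}`.
structure HeckeCliffordRelations {R : Type*} [Ring R] (s c x y : R) : Prop where
  s_mul_s : s * s = 1
  s_mul_x : s * x = y * s - 1 + c
  s_mul_c : s * c = -(c * s)
  c_mul_c : c * c = -1
  c_mul_x : c * x = -(x * c)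
  c_mul_y : c * y = -(y * c)
  commute_x_y : Commute x y

namespace HeckeCliffordRelations

variable {R : Type*} [Ring R] {s c x y : R} (h : HeckeCliffordRelations s c x y)
include h

theorem s_mul_y : s * y = x * s + 1 + c := by
  have hy : s * (x * s + 1 + c) = y := by
    linear_combination (norm := noncomm_ring) h.s_mul_x * s + y * h.s_mul_s + h.s_mul_c
  linear_combination (norm := noncomm_ring) h.s_mul_s * (x * s + 1 + c) - s * hy

theorem s_mul_x_sq : s * x ^ 2 = y ^ 2 * s - (x + y - c * (x - y)) := by
  linear_combination (norm := noncomm_ring) h.s_mul_x * x + y * h.s_mul_x + h.c_mul_y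

theorem s_mul_y_sq : s * y ^ 2 = x ^ 2 * s + (x + y - c * (x - y)) := by
  linear_combination (norm := noncomm_ring) h.s_mul_y * y + x * h.s_mul_y + h.c_mul_x

theorem commute_s_linearPart : Commute s (x + y - c * (x - y)) := by
  show s * _ = _ * s
  linear_combination (norm := noncomm_ring)
    h.s_mul_x + h.s_mul_y - h.s_mul_c * (x - y) + c * (h.s_mul_x - h.s_mul_y)

theorem linearPart_sq : (x + y - c * (x - y)) ^ 2 = 2 * x ^ 2 + 2 * y ^ 2 := by
  linear_combination (norm := noncomm_ring) -(h.c_mul_x + h.c_mul_y) * (x - y)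
    + (h.c_mul_x - h.c_mul_y) * (c * (x - y)) - (x - y) * h.c_mul_c * (x - y)
    - 2 * c * h.commute_x_y.eq

theorem sq_intertwiner : (s * (x ^ 2 - y ^ 2) + (x + y) - c * (x - y)) ^ 2
    = 2 * x ^ 2 + 2 * y ^ 2 - (x ^ 2 - y ^ 2) ^ 2 := by
  have hcd : Commute c (x ^ 2 - y ^ 2) :=
    (commute_sq_of_mul_eq_neg h.c_mul_x).sub_right (commute_sq_of_mul_eq_neg h.c_mul_y)
  have hxd : Commute x (x ^ 2 - y ^ 2) :=
    ((Commute.refl x).pow_right 2).sub_right (h.commute_x_y.pow_right 2)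
  have hyd : Commute y (x ^ 2 - y ^ 2) :=
    (h.commute_x_y.symm.pow_right 2).sub_right ((Commute.refl y).pow_right 2)
  have hdr : Commute (x ^ 2 - y ^ 2) (x + y - c * (x - y)) :=
    ((hxd.add_left hyd).sub_left (hcd.mul_left (hxd.sub_left hyd))).symm
  have hsd : s * (x ^ 2 - y ^ 2) = -((x ^ 2 - y ^ 2) * s) - 2 * (x + y - c * (x - y)) := by
    linear_combination (norm := noncomm_ring) h.s_mul_x_sq - h.s_mul_y_sq
  rw [add_sub_assoc, sq_mul_add_eq_sq_sub_sq h.s_mul_s hsd h.commute_s_linearPart hdr,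
    h.linearPart_sq]

end HeckeCliffordRelations

namespace AHCA

variable {d : ℕ} {A : Type*} [Ring A] [Algebra ℂ A] (H : AHCA d A) {i : ℕ}

theorem heckeCliffordRelations (hi : i + 1 < d) :
    HeckeCliffordRelations (H.s i) (H.c i * H.c (i + 1)) (H.x i) (H.x (i + 1)) := by
  have hi' : i < d := by omega
  have hcc := H.c_anticomm (i + 1) i hi hi' i.succ_ne_self
  exact
    { s_mul_s := H.s_sq i hi
      s_mul_x := H.s_x_same i hi
      s_mul_c := by
        linear_combination (norm := noncomm_ring) H.s_c_left i hi * H.c (i + 1)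
          + H.c (i + 1) * H.s_c_right i hi + hcc * H.s i
      c_mul_c := by
        linear_combination (norm := noncomm_ring) H.c i * hcc * H.c (i + 1)
          - H.c_sq i hi' * H.c (i + 1) * H.c (i + 1) + H.c_sq (i + 1) hi
      c_mul_x := by
        linear_combination (norm := noncomm_ring)
          H.c i * H.c_x_other (i + 1) i hi hi' i.succ_ne_self + H.c_x_same i hi' * H.c (i + 1)
      c_mul_y := by
        linear_combination (norm := noncomm_ring) H.c i * H.c_x_same (i + 1) hi
          - H.c_x_other i (i + 1) hi' hi i.succ_ne_self.symm * H.c (i + 1)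
      commute_x_y := H.x_comm i (i + 1) hi' hi }

theorem phi_mul_phi (hi : i + 1 < d) :
    H.phi i * H.phi i = 2 * H.x i ^ 2 + 2 * H.x (i + 1) ^ 2 - (H.x i ^ 2 - H.x (i + 1) ^ 2) ^ 2 := by
  rw [← sq]
  exact (H.heckeCliffordRelations hi).sq_intertwiner

end AHCA

theorem pow_smul_eq_of_smul_eq {K A M : Type*} [CommMonoid K] [Monoid A] [MulAction K M]
    [MulAction A M] [SMulCommClass A K M] {a : A} {α : K} {v : M} (h : a • v = α • v) (n : ℕ) :
    (a ^ n) • v = (α ^ n) • v := by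
  induction n with
  | zero => simp
  | succ n ih => rw [pow_succ, mul_smul, h, smul_comm, ih, smul_smul, pow_succ']

theorem qval_nonneg (a : ℤ) : 0 ≤ qval a := by
  rcases le_or_gt 0 a with ha | ha
  · exact mul_nonneg ha (by omega)
  · exact mul_nonneg_of_nonpos_of_nonpos ha.le (by omega)

theorem sqrtq_sq (a : ℤ) : sqrtq a ^ 2 = qval a := by
  rw [sqrtq, ← Complex.ofReal_pow, Real.sq_sqrt (by exact_mod_cast qval_nonneg a)]
  norm_cast

theorem two_mul_qval_add_two_mul_qval_sub_sq (a b : ℤ) :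
    2 * qval a + 2 * qval b - (qval a - qval b) ^ 2
      = -((qval a - qval (b + 1)) * (qval a - qval (b - 1))) := by
  simp only [qval]
  ring

/-- If `Y` is an `H_{Cl}^{aff}(d)`-module and `v ∈ Y` is a nonzero vector with
`x_i v = √(q a) v` and `x_{i+1} v = √(q b) v` for integers `a, b`, and
`q a ≠ q (b+1)` and `q a ≠ q (b-1)`, then `φ_i² v ≠ 0`. -/
theorem phi_sq_ne_zero {d : ℕ} {A : Type*} [Ring A] [Algebra ℂ A] (H : AHCA d A)
    {Y : Type*} [AddCommGroup Y] [Module ℂ Y] [Module A Y]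
    [IsScalarTower ℂ A Y] [SMulCommClass A ℂ Y]
    (i : ℕ) (hi : i + 1 < d) (a b : ℤ) (v : Y) (hv : v ≠ 0)
    (hxa : H.x i • v = sqrtq a • v) (hxb : H.x (i + 1) • v = sqrtq b • v)
    (h1 : qval a ≠ qval (b + 1)) (h2 : qval a ≠ qval (b - 1)) :
    (H.phi i * H.phi i) • v ≠ 0 := by
  have hx : (H.x i ^ 2) • v = (qval a : ℂ) • v := by rw [pow_smul_eq_of_smul_eq hxa, sqrtq_sq]
  have hy : (H.x (i + 1) ^ 2) • v = (qval b : ℂ) • v := by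
    rw [pow_smul_eq_of_smul_eq hxb, sqrtq_sq]
  have hxy : (H.x i ^ 2 - H.x (i + 1) ^ 2) • v = ((qval a : ℂ) - qval b) • v := by
    rw [sub_smul, hx, hy, sub_smul]
  have hphi : (H.phi i * H.phi i) • v
      = ((2 * qval a + 2 * qval b - (qval a - qval b) ^ 2 : ℤ) : ℂ) • v := by
    rw [H.phi_mul_phi hi, two_mul, two_mul, sub_smul, add_smul, add_smul, add_smul, hx, hy,
      pow_smul_eq_of_smul_eq hxy]
    push_cast
    module
  rw [hphi, two_mul_qval_add_two_mul_qval_sub_sq]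
  refine smul_ne_zero ?_ hv
  exact_mod_cast neg_ne_zero.mpr (mul_ne_zero (sub_ne_zero.mpr h1) (sub_ne_zero.mpr h2))
end

section
/- Let [a,b] be a segment with d = b - a + 1, and let the degenerate affine Hecke-Clifford algebra act on Φ_a ⊗ Cl_d as in the segment representation. Then for δ ∈ {0,1} and 1 ≤ i ≤ d, x_i²·(φ^δ ⊗ 𝟏) = q(a + i - 1)·(φ^δ ⊗ 𝟏), where q(n) = n(n+1). -/
open CliffordAlgebra

/-- The quadratic form on `ℂ^d` with `Q(e_i) = -1`, whose Clifford algebra is `Cl(d)`. -/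
noncomputable def Qd (d : ℕ) : QuadraticForm ℂ (Fin d → ℂ) :=
  QuadraticMap.weightedSumSquares ℂ (fun _ : Fin d => (-1 : ℂ))

/-- The `j`-th Clifford generator `c_j` of `Cl(d)`. -/
noncomputable def cgen (d : ℕ) (j : Fin d) : CliffordAlgebra (Qd d) :=
  CliffordAlgebra.ι (Qd d) (Pi.single j (1 : ℂ))

/-- The underlying space `Φ_a ⊗ Cl_d` of the segment module: the pair `(u₀, u₁)`
represents `1 ⊗ u₀ + φ ⊗ u₁`, where `Cl_d = Cl(d)·𝟏` is the basic spin
representation (identified with `Cl(d)` itself) and `φ` generates `Φ_a` with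
`φ² = a`. -/
noncomputable abbrev SegSpace (d : ℕ) := CliffordAlgebra (Qd d) × CliffordAlgebra (Qd d)

/-- Action of `c_i = 1 ⊗ c_i` on `Φ_a ⊗ Cl_d` (with the Koszul sign on the odd
component `φ ⊗ u₁`). -/
noncomputable def Cop (d : ℕ) (i : ℕ) : Module.End ℂ (SegSpace d) :=
  if h : i < d then
    LinearMap.prodMap (LinearMap.mulLeft ℂ (cgen d ⟨i, h⟩))
      (-(LinearMap.mulLeft ℂ (cgen d ⟨i, h⟩)))
  else 0

/-- Action of the simple transposition `s_i = 1 ⊗ s_i` on `Φ_a ⊗ Cl_d`, where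
`S_d` acts on `Cl_d = Cl(d)·𝟏` through the algebra automorphisms permuting the
Clifford generators. -/
noncomputable def Sop (d : ℕ)
    (perm : Equiv.Perm (Fin d) → (CliffordAlgebra (Qd d) →ₐ[ℂ] CliffordAlgebra (Qd d)))
    (i : ℕ) : Module.End ℂ (SegSpace d) :=
  if h : i + 1 < d then
    LinearMap.prodMap
      (perm (Equiv.swap ⟨i, Nat.lt_of_succ_lt h⟩ ⟨i + 1, h⟩)).toLinearMap
      (perm (Equiv.swap ⟨i, Nat.lt_of_succ_lt h⟩ ⟨i + 1, h⟩)).toLinearMap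
  else 0

/-- The diagonal part `a ε_i + Σ_{k<i} (1 - c_k c_i) s_{ki}` of the action of `x_i`
on each of the two components of `Φ_a ⊗ Cl_d`. -/
noncomputable def Tdiag (d : ℕ) (a : ℤ)
    (perm : Equiv.Perm (Fin d) → (CliffordAlgebra (Qd d) →ₐ[ℂ] CliffordAlgebra (Qd d)))
    (eps : Fin d → (CliffordAlgebra (Qd d) →ₐ[ℂ] CliffordAlgebra (Qd d)))
    (i : ℕ) (h : i < d) : CliffordAlgebra (Qd d) →ₗ[ℂ] CliffordAlgebra (Qd d) :=
  (a : ℂ) • (eps ⟨i, h⟩).toLinearMap +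
    ∑ k : Fin d,
      if (k : ℕ) < i then
        (perm (Equiv.swap k ⟨i, h⟩)).toLinearMap -
          (LinearMap.mulLeft ℂ (cgen d k * cgen d ⟨i, h⟩)) ∘ₗ
            (perm (Equiv.swap k ⟨i, h⟩)).toLinearMap
      else 0

/-- Action of `x_i = a ⊗ ε_i + Σ_{k<i} 1 ⊗ (1 - c_k c_i) s_{ki} - φ ⊗ c_i` on
`Φ_a ⊗ Cl_d` (the last summand mixes the two components, using `φ² = a`). -/
noncomputable def Xop (d : ℕ) (a : ℤ)
    (perm : Equiv.Perm (Fin d) → (CliffordAlgebra (Qd d) →ₐ[ℂ] CliffordAlgebra (Qd d)))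
    (eps : Fin d → (CliffordAlgebra (Qd d) →ₐ[ℂ] CliffordAlgebra (Qd d)))
    (i : ℕ) : Module.End ℂ (SegSpace d) :=
  if h : i < d then
    LinearMap.prodMap (Tdiag d a perm eps i h) (Tdiag d a perm eps i h) +
      LinearMap.prod
        ((a : ℂ) • ((LinearMap.mulLeft ℂ (cgen d ⟨i, h⟩)) ∘ₗ
          LinearMap.snd ℂ (CliffordAlgebra (Qd d)) (CliffordAlgebra (Qd d))))
        (-((LinearMap.mulLeft ℂ (cgen d ⟨i, h⟩)) ∘ₗ
          LinearMap.fst ℂ (CliffordAlgebra (Qd d)) (CliffordAlgebra (Qd d))))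
  else 0

/-! On each of the two components `x_i` acts by `T = a ε_i + Σ_{k<i} (1 - c_k c_i) s_{ki}`,
and the components are mixed by `-φ c_i` with `φ² = a`; hence on `φ^δ ⊗ 𝟏` the square `x_i²`
is governed by `T (T 1)` and `T c_i + c_i T 1`. Put `S = Σ_{k<i} c_k`. Then `T 1 = (a+i) - S c_i`,
`T c_i = -(a+i) c_i + S`, and summing `T (c_m c_i) = -(a+i) c_m c_i + c_m S` over `m < i` gives
`T (S c_i) = -(a+i) S c_i + S²`. Since `S` is the Clifford image of a vector with `Q = -i`,
`S² = -i`, so `T (T 1) = (a+i)² + i` and `T c_i = -c_i T 1`. Therefore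
`x_i² = (a+i)² + i + a = q(a+i)` on both vectors. -/

open Finset

lemma mul_mul_eq_of_mul_self_eq_neg_one {R : Type*} [Ring R] {x z : R} (hx : x * x = -1)
    (hxz : x * z = -(z * x)) : x * (z * x) = z := by
  rw [← mul_assoc, hxz, neg_mul, mul_assoc, hx, mul_neg_one, neg_neg]

lemma Qd_apply (d : ℕ) (v : Fin d → ℂ) : Qd d v = -∑ k, v k * v k := by
  simp [Qd, QuadraticMap.weightedSumSquares_apply]

lemma polar_Qd (d : ℕ) (v w : Fin d → ℂ) :
    QuadraticMap.polar (Qd d) v w = -2 * ∑ k, v k * w k := by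
  simp only [QuadraticMap.polar, Qd_apply, Pi.add_apply, mul_sum, ← sum_neg_distrib,
    ← sum_sub_distrib]
  exact sum_congr rfl fun k _ => by ring

lemma cgen_mul_ι_of_apply_eq_zero {d : ℕ} {j : Fin d} {v : Fin d → ℂ} (hv : v j = 0) :
    cgen d j * ι (Qd d) v = -(ι (Qd d) v * cgen d j) := by
  have h := ι_mul_ι_add_swap (Q := Qd d) (Pi.single j 1) v
  rw [polar_Qd, sum_eq_single j (fun k _ hk => by simp [hk]) (by simp), hv] at h
  simpa [cgen, eq_neg_iff_add_eq_zero] using h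

lemma cgen_mul_self (d : ℕ) (j : Fin d) : cgen d j * cgen d j = -1 := by
  simp [cgen, ι_sq_scalar, Qd_apply, Pi.single_apply]

lemma cgen_mul_cgen_of_ne {d : ℕ} {j k : Fin d} (h : j ≠ k) :
    cgen d j * cgen d k = -(cgen d k * cgen d j) :=
  cgen_mul_ι_of_apply_eq_zero (Pi.single_eq_of_ne h 1)

lemma sum_cgen_eq_ι (d : ℕ) (s : Finset (Fin d)) :
    ∑ k ∈ s, cgen d k = ι (Qd d) (∑ k ∈ s, Pi.single k 1) := by
  simp [cgen, map_sum]

lemma sum_cgen_mul_self (d : ℕ) (s : Finset (Fin d)) :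
    (∑ k ∈ s, cgen d k) * (∑ k ∈ s, cgen d k) = -(#s : CliffordAlgebra (Qd d)) := by
  rw [sum_cgen_eq_ι, ι_sq_scalar, Qd_apply]
  simp [Finset.sum_apply, Pi.single_apply]

lemma cgen_mul_sum_cgen_of_notMem {d : ℕ} {j : Fin d} {s : Finset (Fin d)} (hj : j ∉ s) :
    cgen d j * ∑ k ∈ s, cgen d k = -((∑ k ∈ s, cgen d k) * cgen d j) := by
  rw [sum_cgen_eq_ι]
  exact cgen_mul_ι_of_apply_eq_zero (by simp [Finset.sum_apply, Pi.single_apply, hj])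

section Tdiag

variable {d : ℕ} (a : ℤ)
  {perm : Equiv.Perm (Fin d) → (CliffordAlgebra (Qd d) →ₐ[ℂ] CliffordAlgebra (Qd d))}
  {eps : Fin d → (CliffordAlgebra (Qd d) →ₐ[ℂ] CliffordAlgebra (Qd d))} (j : Fin d)

lemma Tdiag_apply (x : CliffordAlgebra (Qd d)) :
    Tdiag d a perm eps j j.isLt x = (a : ℂ) • eps j x + ∑ k ∈ Iio j,
      (perm (Equiv.swap k j) x - cgen d k * cgen d j * perm (Equiv.swap k j) x) := by
  simp only [Tdiag, Fin.eta, LinearMap.add_apply, LinearMap.smul_apply, LinearMap.sum_apply,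
    AlgHom.toLinearMap_apply, ← filter_gt_eq_Iio, sum_filter]
  refine congrArg _ (sum_congr rfl fun k _ => ?_)
  split_ifs <;> simp_all [mul_assoc]

lemma Tdiag_one : Tdiag d a perm eps j j.isLt 1 =
    ((a : ℂ) + (j : ℕ)) • 1 - (∑ k ∈ Iio j, cgen d k) * cgen d j := by
  simp only [Tdiag_apply, map_one, mul_one, sum_sub_distrib, sum_const, Fin.card_Iio, sum_mul]
  module

lemma cgen_mul_Tdiag_one : cgen d j * Tdiag d a perm eps j j.isLt 1 =
    ((a : ℂ) + (j : ℕ)) • cgen d j - ∑ k ∈ Iio j, cgen d k := by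
  rw [Tdiag_one, mul_sub, mul_smul_comm, mul_one, mul_mul_eq_of_mul_self_eq_neg_one
    (cgen_mul_self d j) (cgen_mul_sum_cgen_of_notMem (by simp))]

lemma Xop_apply (u v : CliffordAlgebra (Qd d)) :
    Xop d a perm eps j (u, v) = (Tdiag d a perm eps j j.isLt u + (a : ℂ) • (cgen d j * v),
      Tdiag d a perm eps j j.isLt v - cgen d j * u) := by
  simp [Xop, sub_eq_add_neg]

variable (hperm : ∀ (σ : Equiv.Perm (Fin d)) (j : Fin d), perm σ (cgen d j) = cgen d (σ j))
  (heps : ∀ i j : Fin d, eps i (cgen d j) = (if j = i then (-1 : ℂ) else 1) • cgen d j)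
include hperm heps

lemma Tdiag_cgen_self : Tdiag d a perm eps j j.isLt (cgen d j) =
    -((a : ℂ) + (j : ℕ)) • cgen d j + ∑ k ∈ Iio j, cgen d k := by
  have hterm : ∀ k ∈ Iio j, perm (Equiv.swap k j) (cgen d j) -
      cgen d k * cgen d j * perm (Equiv.swap k j) (cgen d j) = cgen d k - cgen d j := by
    intro k hk
    rw [hperm, Equiv.swap_apply_right, mul_assoc,
      mul_mul_eq_of_mul_self_eq_neg_one (cgen_mul_self d k)
        (cgen_mul_cgen_of_ne (mem_Iio.mp hk).ne)]
  rw [Tdiag_apply, heps, if_pos rfl, sum_congr rfl hterm, sum_sub_distrib, sum_const,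
    Fin.card_Iio]
  module

lemma Tdiag_cgen_mul_cgen_self {m : Fin d} (hm : m < j) :
    Tdiag d a perm eps j j.isLt (cgen d m * cgen d j) =
      -((a : ℂ) + (j : ℕ)) • (cgen d m * cgen d j) + cgen d m * ∑ k ∈ Iio j, cgen d k := by
  have hterm : ∀ k ∈ Iio j, perm (Equiv.swap k j) (cgen d m * cgen d j) -
      cgen d k * cgen d j * perm (Equiv.swap k j) (cgen d m * cgen d j) =
        cgen d m * cgen d k - cgen d m * cgen d j := by
    intro k hk
    have hkj : k ≠ j := (mem_Iio.mp hk).ne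
    rw [map_mul, hperm, hperm, Equiv.swap_apply_right]
    -- the summand `k = m`, namely `c_j c_m - 1`, fits the same formula
    rcases eq_or_ne k m with rfl | hkm
    · have h : cgen d k * cgen d j * (cgen d j * cgen d k) = 1 := by
        rw [mul_assoc, ← mul_assoc (cgen d j), cgen_mul_self, neg_one_mul, mul_neg,
          cgen_mul_self, neg_neg]
      rw [Equiv.swap_apply_left, h, cgen_mul_self, cgen_mul_cgen_of_ne hkj.symm]
      abel
    · have h : cgen d k * cgen d j * (cgen d m * cgen d k) = cgen d m * cgen d j := by
        rw [cgen_mul_cgen_of_ne hkj, neg_mul, mul_assoc, mul_mul_eq_of_mul_self_eq_neg_one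
          (cgen_mul_self d k) (cgen_mul_cgen_of_ne hkm), cgen_mul_cgen_of_ne hm.ne', neg_neg]
      rw [Equiv.swap_apply_of_ne_of_ne hkm.symm hm.ne, h]
  have heps_mj : eps j (cgen d m * cgen d j) = -(cgen d m * cgen d j) := by
    rw [map_mul, heps, heps, if_pos rfl, if_neg hm.ne, one_smul, neg_one_smul, mul_neg]
  rw [Tdiag_apply, heps_mj, sum_congr rfl hterm, sum_sub_distrib, ← mul_sum, sum_const,
    Fin.card_Iio]
  module

lemma Tdiag_sum_cgen_mul_cgen_self :
    Tdiag d a perm eps j j.isLt ((∑ k ∈ Iio j, cgen d k) * cgen d j) =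
      -((a : ℂ) + (j : ℕ)) • ((∑ k ∈ Iio j, cgen d k) * cgen d j) - ((j : ℕ) : ℂ) • 1 := by
  rw [sum_mul, map_sum, sum_congr rfl fun m hm =>
      Tdiag_cgen_mul_cgen_self a j hperm heps (mem_Iio.mp hm),
    sum_add_distrib, ← smul_sum, ← sum_mul, ← sum_mul, sum_cgen_mul_self, Fin.card_Iio,
    ← map_natCast (algebraMap ℂ (CliffordAlgebra (Qd d))), Algebra.algebraMap_eq_smul_one]
  module

lemma Tdiag_Tdiag_one : Tdiag d a perm eps j j.isLt (Tdiag d a perm eps j j.isLt 1) =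
    (((a : ℂ) + (j : ℕ)) ^ 2 + (j : ℕ)) • 1 := by
  rw [Tdiag_one, map_sub, map_smul, Tdiag_one, Tdiag_sum_cgen_mul_cgen_self a j hperm heps]
  module

lemma Tdiag_cgen_self_eq_neg_cgen_mul_Tdiag_one :
    Tdiag d a perm eps j j.isLt (cgen d j) = -(cgen d j * Tdiag d a perm eps j j.isLt 1) := by
  rw [Tdiag_cgen_self a j hperm heps, cgen_mul_Tdiag_one]
  module

end Tdiag

/-- Here `i` is `0`-based: it indexes the paper's `x_{i+1}`, with eigenvalue `q(a + i)`. -/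
theorem segment_xsq_eigenvalue_general (d : ℕ) (a : ℤ)
    (perm : Equiv.Perm (Fin d) → (CliffordAlgebra (Qd d) →ₐ[ℂ] CliffordAlgebra (Qd d)))
    (hperm : ∀ (σ : Equiv.Perm (Fin d)) (j : Fin d), perm σ (cgen d j) = cgen d (σ j))
    (eps : Fin d → (CliffordAlgebra (Qd d) →ₐ[ℂ] CliffordAlgebra (Qd d)))
    (heps : ∀ i j : Fin d, eps i (cgen d j) = (if j = i then (-1 : ℂ) else 1) • cgen d j)
    (i : ℕ) (hi : i < d) :
    ∀ v ∈ ({((1 : CliffordAlgebra (Qd d)), (0 : CliffordAlgebra (Qd d))),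
            ((0 : CliffordAlgebra (Qd d)), (1 : CliffordAlgebra (Qd d)))} :
              Set (SegSpace d)),
      (Xop d a perm eps i) ((Xop d a perm eps i) v) =
        (((a + i) * (a + i + 1) : ℤ) : ℂ) • v := by
  obtain ⟨j, rfl⟩ : ∃ j : Fin d, (j : ℕ) = i := ⟨⟨i, hi⟩, rfl⟩
  have hq : (((a + j) * (a + j + 1) : ℤ) : ℂ) = ((a : ℂ) + (j : ℕ)) ^ 2 + (j : ℕ) + a := by
    push_cast; ring
  have hTT := Tdiag_Tdiag_one a j hperm heps
  have hTc := Tdiag_cgen_self_eq_neg_cgen_mul_Tdiag_one a j hperm heps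
  rintro v (rfl | rfl) <;>
    simp only [Xop_apply, mul_zero, mul_one, smul_zero, add_zero, zero_add, map_zero, sub_zero,
      zero_sub, map_neg, map_smul, mul_neg, mul_smul_comm, cgen_mul_self, hTT, hTc, hq,
      Prod.smul_mk] <;>
    exact Prod.ext (by module) (by module)

/-- For the segment module `Φ_a ⊗ Cl_d` attached to a segment `[a, b]` with
`d = b - a + 1`, the action of `x_i²` on `φ^δ ⊗ 𝟏` (`δ ∈ {0,1}`, i.e. on the
vectors `(1, 0)` and `(0, 1)`) is by the scalar `q(a + i - 1)` (in `0`-based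
indexing: the `i`-th polynomial generator, `0 ≤ i < d`, acts with eigenvalue
`q(a + i) = (a + i)(a + i + 1)`). -/
theorem segment_xsq_eigenvalue (d : ℕ) (hd : 1 ≤ d) (a b : ℤ) (hab : b - a + 1 = d)
    (perm : Equiv.Perm (Fin d) → (CliffordAlgebra (Qd d) →ₐ[ℂ] CliffordAlgebra (Qd d)))
    (hperm : ∀ (σ : Equiv.Perm (Fin d)) (j : Fin d), perm σ (cgen d j) = cgen d (σ j))
    (eps : Fin d → (CliffordAlgebra (Qd d) →ₐ[ℂ] CliffordAlgebra (Qd d)))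
    (heps : ∀ i j : Fin d, eps i (cgen d j) = (if j = i then (-1 : ℂ) else 1) • cgen d j)
    (i : ℕ) (hi : i < d) :
    ∀ v ∈ ({((1 : CliffordAlgebra (Qd d)), (0 : CliffordAlgebra (Qd d))),
            ((0 : CliffordAlgebra (Qd d)), (1 : CliffordAlgebra (Qd d)))} :
              Set (SegSpace d)),
      (Xop d a perm eps i) ((Xop d a perm eps i) v) =
        (((a + i) * (a + i + 1) : ℤ) : ℂ) • v :=
  segment_xsq_eigenvalue_general d a perm hperm eps heps i hi
end

section
/- Let M be a module over the degenerate affine Hecke-Clifford algebra H(d) on which all x_i² act diagonalizably with eigenvalues of the form q(a) = a(a+1), a ∈ ℤ. If ζ is a weight of M (i.e. there exists a nonzero simultaneous eigenvector for all x_i² with eigenvalues q(ζ_i)), then there exists a nonzero v ∈ M_ζ with x_i·v = √(q(ζ_i))·v for all i = 1,…,d. -/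
/-- The `ℂ`-linear endomorphism of an `H_{Cl}^{aff}(d)`-module `M` given by the
action of `x_i²`. -/
def xsqEnd {d : ℕ} {A : Type*} [Ring A] [Algebra ℂ A] (H : AHCA d A)
    (M : Type*) [AddCommGroup M] [Module ℂ M] [Module A M] [SMulCommClass A ℂ M]
    (i : ℕ) : Module.End ℂ M where
  toFun m := (H.x i * H.x i) • m
  map_add' m n := smul_add _ m n
  map_smul' c m := smul_comm _ c m

/-- If all the `x_i²` act diagonalizably on the `H_{Cl}^{aff}(d)`-module `M`
with eigenvalues of the form `q(a) = a(a+1)`, `a ∈ ℤ`, and `ζ` is a weight of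
`M` (there is a nonzero simultaneous eigenvector of the `x_i²` with eigenvalues
`q(ζ_i)`), then there is a nonzero `v ∈ M_ζ` with `x_i v = √(q(ζ_i)) v` for all
`i`, where `√(q(ζ_i))` is a fixed square root of `q(ζ_i)`. -/
theorem exists_x_eigenvector {d : ℕ} {A : Type*} [Ring A] [Algebra ℂ A] (H : AHCA d A)
    (M : Type*) [AddCommGroup M] [Module ℂ M] [Module A M] [SMulCommClass A ℂ M]
    (hdiag : ∀ i, i < d →
      (⨆ a : ℤ, Module.End.eigenspace (xsqEnd H M i) ((qval a : ℤ) : ℂ)) = ⊤)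
    (ζ : ℕ → ℤ) (κ : ℕ → ℂ) (hκ : ∀ i, κ i ^ 2 = ((qval (ζ i) : ℤ) : ℂ))
    (hwt : ∃ m : M, m ≠ 0 ∧ ∀ i, i < d →
      (H.x i * H.x i) • m = ((qval (ζ i) : ℤ) : ℂ) • m) :
    ∃ v : M, v ≠ 0 ∧
      (∀ i, i < d → (H.x i * H.x i) • v = ((qval (ζ i) : ℤ) : ℂ) • v) ∧
      (∀ i, i < d → H.x i • v = κ i • v) := by
  -- helper: commuting algebra elements give commuting smuls
  have swap : ∀ (a b : A) (w : M), a * b = b * a → a • (b • w) = b • (a • w) := by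
    intro a b w h
    rw [← mul_smul, h, mul_smul]
  suffices h : ∀ k, k ≤ d → ∃ v : M, v ≠ 0 ∧
      (∀ i, i < d → (H.x i * H.x i) • v = ((qval (ζ i) : ℤ) : ℂ) • v) ∧
      (∀ i, i < k → H.x i • v = κ i • v) by
    obtain ⟨v, h1, h2, h3⟩ := h d le_rfl
    exact ⟨v, h1, h2, h3⟩
  intro k
  induction k with
  | zero =>
    intro _
    obtain ⟨m, hm, hsq⟩ := hwt
    exact ⟨m, hm, hsq, fun i hi => absurd hi (Nat.not_lt_zero i)⟩
  | succ k ih =>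
    intro hk
    have hkd : k < d := hk
    obtain ⟨w, hw0, hwsq, hwx⟩ := ih hkd.le
    by_cases hcase : H.x k • w + κ k • w = 0
    · -- x_k w = -κ_k w ; take v = c_k • w
      have hxkw : H.x k • w = -(κ k • w) := eq_neg_of_add_eq_zero_left hcase
      refine ⟨H.c k • w, ?_, ?_, ?_⟩
      · intro hzero
        apply hw0
        have : (H.c k * H.c k) • w = (0 : M) := by rw [mul_smul, hzero, smul_zero]
        rw [H.c_sq k hkd, neg_smul, one_smul, neg_eq_zero] at this
        exact this
      · intro i hi
        have hcomm : (H.x i * H.x i) * H.c k = H.c k * (H.x i * H.x i) := by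
          by_cases hik : i = k
          · subst hik
            have hc := H.c_x_same i hkd
            have hcx : H.x i * H.c i = -(H.c i * H.x i) := by rw [hc, neg_neg]
            calc H.x i * H.x i * H.c i = H.x i * (H.x i * H.c i) := mul_assoc _ _ _
              _ = H.x i * -(H.c i * H.x i) := by rw [hcx]
              _ = -(H.x i * H.c i) * H.x i := by rw [mul_neg, ← mul_assoc, neg_mul]
              _ = H.c i * H.x i * H.x i := by rw [hcx, neg_neg]
              _ = H.c i * (H.x i * H.x i) := mul_assoc _ _ _
          · have := H.c_x_other k i hkd hi (fun h => hik h.symm)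
            rw [mul_assoc, ← this, ← mul_assoc, ← this, mul_assoc]
        rw [swap _ _ _ hcomm, hwsq i hi, smul_comm]
      · intro i hi
        rcases Nat.lt_succ_iff_lt_or_eq.mp hi with hi' | hi'
        · have hik : i ≠ k := Nat.ne_of_lt hi'
          have hc := H.c_x_other k i hkd (hi'.trans hkd) (fun h => hik h.symm)
          have : H.x i * H.c k = H.c k * H.x i := hc.symm
          rw [swap _ _ _ this, hwx i hi', smul_comm]
        · subst hi'
          have hc : H.x i * H.c i = -(H.c i * H.x i) := by
            rw [H.c_x_same i hkd, neg_neg]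
          rw [← mul_smul, hc, neg_smul, mul_smul, hxkw, smul_neg, neg_neg, smul_comm]
    · -- take v = x_k w + κ_k w
      refine ⟨H.x k • w + κ k • w, hcase, ?_, ?_⟩
      · intro i hi
        have hcomm : (H.x i * H.x i) * H.x k = H.x k * (H.x i * H.x i) := by
          have := H.x_comm i k hi hkd
          rw [mul_assoc, this, ← mul_assoc, this, mul_assoc]
        have h1 : (H.x i * H.x i) • (H.x k • w) = ((qval (ζ i) : ℤ) : ℂ) • (H.x k • w) := by
          rw [swap _ _ _ hcomm, hwsq i hi, smul_comm]
        have h2 : (H.x i * H.x i) • (κ k • w) = ((qval (ζ i) : ℤ) : ℂ) • (κ k • w) := by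
          rw [smul_comm, hwsq i hi, smul_comm]
        rw [smul_add, h1, h2, smul_add]
      · intro i hi
        rcases Nat.lt_succ_iff_lt_or_eq.mp hi with hi' | hi'
        · have hcomm : H.x i * H.x k = H.x k * H.x i :=
            H.x_comm i k (hi'.trans hkd) hkd
          have h1 : H.x i • (H.x k • w) = κ i • (H.x k • w) := by
            rw [swap _ _ _ hcomm, hwx i hi', smul_comm]
          have h2 : H.x i • (κ k • w) = κ i • (κ k • w) := by
            rw [smul_comm, hwx i hi', smul_comm]
          rw [smul_add, h1, h2, smul_add]
        · subst hi'
          have hsq : (H.x i * H.x i) • w = (κ i * κ i) • w := by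
            rw [hwsq i hkd, ← hκ i, sq]
          have h1 : H.x i • (H.x i • w) = (κ i * κ i) • w := by
            rw [← mul_smul, hsq]
          have h2 : H.x i • (κ i • w) = κ i • (H.x i • w) := smul_comm _ _ _
          rw [smul_add, h1, h2, smul_add, ← mul_smul, add_comm]
end

section
/- For each X ∈ q(n), the super Casimir element Ω = Σ_{i,j∈I⁺} e_{ij} ⊗ ē_{ji} - Σ_{i,j∈I⁺} f_{ij} ⊗ f̄_{ji} ∈ q(n) ⊗ End(V) satisfies [1 ⊗ X + X ⊗ 1, Ω] = 0, where the bracket is the super commutator and tensor multiplication obeys the sign rule. -/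
open Matrix

/-- Index set of the standard basis of `V = ℂ^{n|n}`: `Sum.inl k` is the even
index `k ∈ I⁺`, `Sum.inr k` is the odd index `-k`. -/
abbrev SIdx (n : ℕ) := Fin n ⊕ Fin n

/-- Parity exponent of a basis index. -/
def par {n : ℕ} : SIdx n → ℕ
  | Sum.inl _ => 0
  | Sum.inr _ => 1

/-- Matrix units `E_{ij}`. -/
noncomputable def Estd (n : ℕ) (i j : SIdx n) : Matrix (SIdx n) (SIdx n) ℂ :=
  Matrix.single i j 1

/-- `e_{ij} = E_{ij} + E_{-i,-j}` (even basis elements of `q(n)`). -/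
noncomputable def eQ (n : ℕ) (i j : Fin n) : Matrix (SIdx n) (SIdx n) ℂ :=
  Estd n (Sum.inl i) (Sum.inl j) + Estd n (Sum.inr i) (Sum.inr j)

/-- `f_{ij} = E_{-i,j} + E_{i,-j}` (odd basis elements of `q(n)`). -/
noncomputable def fQ (n : ℕ) (i j : Fin n) : Matrix (SIdx n) (SIdx n) ℂ :=
  Estd n (Sum.inr i) (Sum.inl j) + Estd n (Sum.inl i) (Sum.inr j)

/-- `ē_{ij} = E_{ij} - E_{-i,-j}`. -/
noncomputable def ebar (n : ℕ) (i j : Fin n) : Matrix (SIdx n) (SIdx n) ℂ :=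
  Estd n (Sum.inl i) (Sum.inl j) - Estd n (Sum.inr i) (Sum.inr j)

/-- `f̄_{ij} = E_{-i,j} - E_{i,-j}`. -/
noncomputable def fbar (n : ℕ) (i j : Fin n) : Matrix (SIdx n) (SIdx n) ℂ :=
  Estd n (Sum.inr i) (Sum.inl j) - Estd n (Sum.inl i) (Sum.inr j)

/-- Action of the pure tensor `A ⊗ B` (with `B` of parity `pB`) on `V ⊗ V`
(realized as functions `I × I → ℂ`) via the super sign rule
`(A ⊗ B)(v ⊗ w) = (-1)^{p(B) p(v)} A v ⊗ B w`.  Composition of these operators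
realizes the Koszul-signed multiplication of `End(V) ⊗ End(V)`. -/
noncomputable def rho {n : ℕ} (A B : Matrix (SIdx n) (SIdx n) ℂ) (pB : ℕ)
    (f : SIdx n × SIdx n → ℂ) : SIdx n × SIdx n → ℂ :=
  fun pq => ∑ k : SIdx n, ∑ l : SIdx n,
    ((-1 : ℂ)) ^ (pB * par k) * A pq.1 k * B pq.2 l * f (k, l)

/-- The super Casimir `Ω = Σ_{i,j} e_{ij} ⊗ ē_{ji} - Σ_{i,j} f_{ij} ⊗ f̄_{ji}`, acting
on `V ⊗ V` via the super sign rule. -/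
noncomputable def OmegaOp (n : ℕ) (f : SIdx n × SIdx n → ℂ) : SIdx n × SIdx n → ℂ :=
  (∑ i : Fin n, ∑ j : Fin n, rho (eQ n i j) (ebar n j i) 0 f) -
    (∑ i : Fin n, ∑ j : Fin n, rho (fQ n i j) (fbar n j i) 1 f)

/-- `1 ⊗ X + X ⊗ 1` for the even element `X = e_{ab}` of `q(n)`. -/
noncomputable def DeltaE (n : ℕ) (a b : Fin n) (f : SIdx n × SIdx n → ℂ) :
    SIdx n × SIdx n → ℂ :=
  rho (eQ n a b) 1 0 f + rho 1 (eQ n a b) 0 f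

/-- `1 ⊗ X + X ⊗ 1` for the odd element `X = f_{ab}` of `q(n)`. -/
noncomputable def DeltaF (n : ℕ) (a b : Fin n) (f : SIdx n × SIdx n → ℂ) :
    SIdx n × SIdx n → ℂ :=
  rho (fQ n a b) 1 0 f + rho 1 (fQ n a b) 1 f

/-! On `V ⊗ V` the Casimir is `Ω = P (1 + J ⊗ J)`, where `P` is the super flip
`v ⊗ w ↦ (-1)^{p(v) p(w)} w ⊗ v` and `J = Σ_i f̄_{ii}` is the odd operator whose supercommutant is
`q(n)`. The coproduct `X ⊗ 1 + 1 ⊗ X` of a homogeneous `X` commutes with `P` (super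
cocommutativity), and with `J ⊗ J` when `X ∈ q(n)`, because `X` then supercommutes with `J`. -/

section

variable {n : ℕ}

theorem rho_one_right_apply (A : Matrix (SIdx n) (SIdx n) ℂ) (s : ℕ) (f : SIdx n × SIdx n → ℂ)
    (p q : SIdx n) : rho A 1 s f (p, q) = ∑ k, (-1 : ℂ) ^ (s * par k) * A p k * f (k, q) := by
  simp [rho, Matrix.one_apply]

theorem rho_one_left_apply (B : Matrix (SIdx n) (SIdx n) ℂ) (s : ℕ) (f : SIdx n × SIdx n → ℂ)
    (p q : SIdx n) : rho 1 B s f (p, q) = (-1 : ℂ) ^ (s * par p) * ∑ l, B q l * f (p, l) := by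
  simp [rho, Matrix.one_apply, Finset.mul_sum, mul_assoc, -Fintype.sum_sum_type]

theorem rho_add (A B : Matrix (SIdx n) (SIdx n) ℂ) (s : ℕ) (f g : SIdx n × SIdx n → ℂ) :
    rho A B s (f + g) = rho A B s f + rho A B s g := by
  funext pq
  simp [rho, mul_add, Finset.sum_add_distrib, -Fintype.sum_sum_type]

noncomputable def deltaOp (X : Matrix (SIdx n) (SIdx n) ℂ) (s : ℕ) (f : SIdx n × SIdx n → ℂ) :
    SIdx n × SIdx n → ℂ :=
  rho X 1 0 f + rho 1 X s f

theorem deltaOp_add (X : Matrix (SIdx n) (SIdx n) ℂ) (s : ℕ) (f g : SIdx n × SIdx n → ℂ) :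
    deltaOp X s (f + g) = deltaOp X s f + deltaOp X s g := by
  simp only [deltaOp, rho_add]
  abel

noncomputable def superFlip (f : SIdx n × SIdx n → ℂ) : SIdx n × SIdx n → ℂ :=
  fun pq => (-1 : ℂ) ^ (par pq.1 * par pq.2) * f (pq.2, pq.1)

def IsHomogeneous (X : Matrix (SIdx n) (SIdx n) ℂ) (s : ℕ) : Prop :=
  ∀ p k, X p k ≠ 0 → (-1 : ℂ) ^ par p = (-1) ^ (par k + s)

theorem IsHomogeneous.mul_neg_one_pow {X : Matrix (SIdx n) (SIdx n) ℂ} {s : ℕ}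
    (hX : IsHomogeneous X s) (p k : SIdx n) (r : ℕ) :
    X p k * (-1 : ℂ) ^ (par k * r) = (-1) ^ ((par p + s) * r) * X p k := by
  by_cases h : X p k = 0
  · simp [h]
  have hk : (-1 : ℂ) ^ (par p + s) = (-1) ^ par k := by
    rw [pow_add, hX p k h, pow_add, mul_assoc, ← mul_pow, neg_one_mul, neg_neg, one_pow, mul_one]
  rw [pow_mul, pow_mul, hk, mul_comm]

theorem deltaOp_superFlip {X : Matrix (SIdx n) (SIdx n) ℂ} {s : ℕ} (hX : IsHomogeneous X s)
    (f : SIdx n × SIdx n → ℂ) : deltaOp X s (superFlip f) = superFlip (deltaOp X s f) := by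
  funext ⟨p, q⟩
  have hleft : ∑ k, X p k * ((-1) ^ (par k * par q) * f (q, k)) =
      (-1) ^ ((par p + s) * par q) * ∑ k, X p k * f (q, k) := by
    rw [Finset.mul_sum]
    exact Finset.sum_congr rfl fun k _ => by rw [← mul_assoc, hX.mul_neg_one_pow, mul_assoc]
  have hright : ∑ l, X q l * ((-1) ^ (par p * par l) * f (l, p)) =
      (-1) ^ ((par q + s) * par p) * ∑ l, X q l * f (l, p) := by
    rw [Finset.mul_sum]
    exact Finset.sum_congr rfl fun l _ => by
      rw [← mul_assoc, mul_comm (par p), hX.mul_neg_one_pow, mul_assoc]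
  simp only [deltaOp, Pi.add_apply, rho_one_right_apply, rho_one_left_apply, superFlip, zero_mul,
    pow_zero, one_mul, hleft, hright]
  clear hleft hright
  generalize ∑ k, X p k * f (q, k) = A
  generalize ∑ l, X q l * f (l, p) = B
  rcases Nat.even_or_odd s with hs | hs <;> cases p <;> cases q <;>
    simp [par, pow_add, hs.neg_one_pow] <;> ring

theorem neg_one_pow_par_swap (k : SIdx n) : (-1 : ℂ) ^ par k.swap = -(-1) ^ par k := by
  cases k <;> simp [par]

noncomputable def oddJ (n : ℕ) : Matrix (SIdx n) (SIdx n) ℂ := ∑ i, fbar n i i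

theorem oddJ_apply (p k : SIdx n) : oddJ n p k = if k = p.swap then (-1) ^ par k else 0 := by
  cases p <;> cases k <;>
    simp [oddJ, fbar, Estd, Matrix.sum_apply, Matrix.single_apply, par, ite_and, eq_comm, apply_ite]

theorem rho_oddJ_apply (f : SIdx n × SIdx n → ℂ) (p q : SIdx n) :
    rho (oddJ n) (oddJ n) 1 f (p, q) = (-1) ^ par q.swap * f (p.swap, q.swap) := by
  simp [rho, oddJ_apply, -Fintype.sum_sum_type, ← pow_add]

theorem omegaOp_eq_superFlip (f : SIdx n × SIdx n → ℂ) :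
    OmegaOp n f = superFlip (f + rho (oddJ n) (oddJ n) 1 f) := by
  funext ⟨p, q⟩
  simp only [superFlip, Pi.add_apply, rho_oddJ_apply]
  cases p <;> cases q <;>
    simp [OmegaOp, rho, eQ, fQ, ebar, fbar, Estd, Matrix.single_apply, ite_and, par, mul_ite,
      ite_mul] <;> ring

/-- In the basis `(v_i)_{i ∈ I⁺}, (v_{-i})_{i ∈ I⁺}`, `q(n)` consists of the block matrices
`[[A, B], [B, A]]`. -/
def InQueer (X : Matrix (SIdx n) (SIdx n) ℂ) : Prop :=
  ∀ p k, X p.swap k.swap = X p k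

theorem deltaOp_rho_oddJ {X : Matrix (SIdx n) (SIdx n) ℂ} {s : ℕ} (hX : IsHomogeneous X s)
    (hXq : InQueer X) (f : SIdx n × SIdx n → ℂ) :
    deltaOp X s (rho (oddJ n) (oddJ n) 1 f) = rho (oddJ n) (oddJ n) 1 (deltaOp X s f) := by
  funext ⟨p, q⟩
  have hleft : ∑ k, X p k * ((-1) ^ par q.swap * f (k.swap, q.swap)) =
      (-1) ^ par q.swap * ∑ k, X p.swap k * f (k, q.swap) := by
    rw [Finset.mul_sum]
    conv_rhs => rw [← (Equiv.sumComm _ _).sum_comp]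
    exact Finset.sum_congr rfl fun k _ => by rw [Equiv.sumComm_apply, hXq]; ring
  have hright : ∑ l, X q l * ((-1) ^ par l.swap * f (p.swap, l.swap)) =
      -(-1) ^ (par q + s) * ∑ l, X q.swap l * f (p.swap, l) := by
    rw [Finset.mul_sum]
    conv_rhs => rw [← (Equiv.sumComm _ _).sum_comp]
    refine Finset.sum_congr rfl fun l _ => ?_
    have hl := hX.mul_neg_one_pow q l 1
    simp only [mul_one] at hl
    rw [Equiv.sumComm_apply, hXq, neg_one_pow_par_swap]
    linear_combination (-f (p.swap, l.swap)) * hl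
  simp only [deltaOp, Pi.add_apply, rho_one_right_apply, rho_one_left_apply, rho_oddJ_apply,
    zero_mul, pow_zero, one_mul, hleft, hright]
  clear hleft hright
  generalize ∑ k, X p.swap k * f (k, q.swap) = A
  generalize ∑ l, X q.swap l * f (p.swap, l) = B
  rcases Nat.even_or_odd s with hs | hs <;> cases p <;> cases q <;>
    simp [par, pow_add, hs.neg_one_pow] <;> ring

theorem deltaOp_omegaOp {X : Matrix (SIdx n) (SIdx n) ℂ} {s : ℕ} (hX : IsHomogeneous X s)
    (hXq : InQueer X) (f : SIdx n × SIdx n → ℂ) :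
    deltaOp X s (OmegaOp n f) = OmegaOp n (deltaOp X s f) := by
  rw [omegaOp_eq_superFlip, omegaOp_eq_superFlip, deltaOp_superFlip hX, deltaOp_add,
    deltaOp_rho_oddJ hX hXq]

theorem eQ_isHomogeneous (a b : Fin n) : IsHomogeneous (eQ n a b) 0 := by
  intro p k h
  cases p <;> cases k <;> simp_all [eQ, Estd, Matrix.single_apply, par]

theorem fQ_isHomogeneous (a b : Fin n) : IsHomogeneous (fQ n a b) 1 := by
  intro p k h
  cases p <;> cases k <;> simp_all [fQ, Estd, Matrix.single_apply, par]

theorem eQ_inQueer (a b : Fin n) : InQueer (eQ n a b) := by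
  intro p k
  cases p <;> cases k <;> simp [eQ, Estd, Matrix.single_apply]

theorem fQ_inQueer (a b : Fin n) : InQueer (fQ n a b) := by
  intro p k
  cases p <;> cases k <;> simp [fQ, Estd, Matrix.single_apply]

end

/-- For every `X ∈ q(n)` (it suffices to take the basis elements `e_{ab}`, `f_{ab}`),
the super Casimir satisfies `[1 ⊗ X + X ⊗ 1, Ω] = 0`.  Since `Ω` is even the super
commutator is the ordinary commutator of the corresponding operators on `V ⊗ V`. -/
theorem superCasimir_invariant (n : ℕ) (a b : Fin n) :
    (∀ f : SIdx n × SIdx n → ℂ, DeltaE n a b (OmegaOp n f) = OmegaOp n (DeltaE n a b f)) ∧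
    (∀ f : SIdx n × SIdx n → ℂ, DeltaF n a b (OmegaOp n f) = OmegaOp n (DeltaF n a b f)) :=
  ⟨deltaOp_omegaOp (eQ_isHomogeneous a b) (eQ_inQueer a b),
    deltaOp_omegaOp (fQ_isHomogeneous a b) (fQ_inQueer a b)⟩
end

section
/- Let λ, μ be strict partitions (strictly decreasing sequences of positive integers) with μ ⊆ λ, giving a shifted skew shape λ/μ with d boxes. Define the content c of a box of the shifted diagram so that diagonal boxes have content 0 and contents increase by one moving right (northeast diagonals). Then for any standard filling L of λ/μ (rows increasing left to right, columns increasing top to bottom), consecutive entries i, i+1 of L satisfy c(L_{i+1}) ≠ c(L_i), unless the boxes containing i and i+1 both have content 0, in which case they lie in consecutive rows on the main diagonal. -/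
/-- The cells of the shifted skew shape `λ/μ`: a pair `(i, j)` of a row `i` and
an (absolute) column `j`, with row `i` occupying columns
`i + μ_i, …, i + λ_i - 1`. -/
def Cell (n : ℕ) (lam mu : Fin n → ℕ) : Type :=
  {p : Fin n × ℕ // (p.1 : ℕ) + mu p.1 ≤ p.2 ∧ p.2 < (p.1 : ℕ) + lam p.1}

/-- The content of a cell: `j - i` for the box in row `i`, column `j` (the main
diagonal `j = i` has content `0`, contents increase by one moving right). -/
def content {n : ℕ} {lam mu : Fin n → ℕ} (c : Cell n lam mu) : ℕ :=
  c.1.2 - (c.1.1 : ℕ)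

/-- Two cells on the same diagonal in adjacent rows have entries differing by
at least two, because the cell to the right of the upper one lies strictly
between them. -/
lemma diag_adj {n d : ℕ} {lam mu : Fin n → ℕ}
    (hlam_strict : ∀ i j : Fin n, i < j → lam j < lam i)
    (T : Cell n lam mu → Fin d)
    (hT_row : ∀ c c' : Cell n lam mu, c.1.1 = c'.1.1 → c.1.2 < c'.1.2 → T c < T c')
    (hT_col : ∀ c c' : Cell n lam mu, c.1.2 = c'.1.2 → c.1.1 < c'.1.1 → T c < T c')
    (a b : Cell n lam mu) (hrow : (b.1.1 : ℕ) = (a.1.1 : ℕ) + 1)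
    (hk : (b.1.2 : ℕ) - (b.1.1 : ℕ) = a.1.2 - (a.1.1 : ℕ)) :
    (T a : ℕ) + 2 ≤ (T b : ℕ) := by
  have h1 := a.2.1
  have h2 := a.2.2
  have h3 := b.2.1
  have h4 := b.2.2
  have hab : a.1.1 < b.1.1 := by rw [Fin.lt_def]; omega
  have hL := hlam_strict a.1.1 b.1.1 hab
  have hw1 : (a.1.1 : ℕ) + mu a.1.1 ≤ a.1.2 + 1 := by omega
  have hw2 : a.1.2 + 1 < (a.1.1 : ℕ) + lam a.1.1 := by omega
  let w : Cell n lam mu := ⟨(a.1.1, a.1.2 + 1), hw1, hw2⟩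
  have t1 : T a < T w := hT_row a w rfl (Nat.lt_succ_self _)
  have t2 : T w < T b := hT_col w b (by show a.1.2 + 1 = b.1.2; omega) hab
  have u1 := Fin.lt_def.mp t1
  have u2 := Fin.lt_def.mp t2
  omega

/-- Two distinct cells on the same diagonal (upper one in row `a.1.1`, lower
one `t+1` rows below) have entries differing by at least two. -/
lemma diag_chain {n d : ℕ} {lam mu : Fin n → ℕ}
    (hlam_strict : ∀ i j : Fin n, i < j → lam j < lam i)
    (hmu_mono : ∀ i j : Fin n, i < j → mu j ≤ mu i)
    (T : Cell n lam mu → Fin d)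
    (hT_row : ∀ c c' : Cell n lam mu, c.1.1 = c'.1.1 → c.1.2 < c'.1.2 → T c < T c')
    (hT_col : ∀ c c' : Cell n lam mu, c.1.2 = c'.1.2 → c.1.1 < c'.1.1 → T c < T c') :
    ∀ t : ℕ, ∀ a b : Cell n lam mu, (b.1.1 : ℕ) = (a.1.1 : ℕ) + (t + 1) →
      (b.1.2 : ℕ) - (b.1.1 : ℕ) = a.1.2 - (a.1.1 : ℕ) →
      (T a : ℕ) + 2 ≤ (T b : ℕ) := by
  intro t
  induction t with
  | zero =>
    intro a b hrow hk
    exact diag_adj hlam_strict T hT_row hT_col a b (by omega) hk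
  | succ t ih =>
    intro a b hrow hk
    have h1 := a.2.1
    have h2 := a.2.2
    have h3 := b.2.1
    have h4 := b.2.2
    have hbn := b.1.1.isLt
    have hrn : (a.1.1 : ℕ) + 1 < n := by omega
    set r : Fin n := ⟨(a.1.1 : ℕ) + 1, hrn⟩ with hr
    set k : ℕ := a.1.2 - (a.1.1 : ℕ) with hkk
    have hab : a.1.1 < r := by rw [Fin.lt_def]; simp [hr]
    have hrb : r < b.1.1 := by rw [Fin.lt_def]; simp [hr]; omega
    have hmu' : mu r ≤ mu a.1.1 := hmu_mono a.1.1 r hab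
    have hlam' := hlam_strict r b.1.1 hrb
    have hm1 : (r : ℕ) + mu r ≤ (r : ℕ) + k := by
      have : (r : ℕ) = (a.1.1 : ℕ) + 1 := rfl
      omega
    have hm2 : (r : ℕ) + k < (r : ℕ) + lam r := by omega
    let m : Cell n lam mu := ⟨(r, (r : ℕ) + k), hm1, hm2⟩
    have s1 : (T a : ℕ) + 2 ≤ (T m : ℕ) := by
      apply diag_adj hlam_strict T hT_row hT_col a m
      · rfl
      · show (r : ℕ) + k - (r : ℕ) = a.1.2 - (a.1.1 : ℕ); omega
    have s2 : (T m : ℕ) + 2 ≤ (T b : ℕ) := by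
      apply ih m b
      · show (b.1.1 : ℕ) = (r : ℕ) + (t + 1)
        have : (r : ℕ) = (a.1.1 : ℕ) + 1 := rfl
        omega
      · show (b.1.2 : ℕ) - (b.1.1 : ℕ) = (r : ℕ) + k - (r : ℕ); omega
    omega

/-- Let `λ, μ` be strict partitions with `μ ⊆ λ`, giving a shifted skew shape
`λ/μ` with `d` boxes, and let `T` be a standard filling (a bijective filling
by `0, …, d-1` increasing along rows and down columns).  Then two cells carrying
consecutive entries have different contents, unless both boxes have content `0`,
in which case they lie in consecutive rows on the main diagonal. -/
theorem consecutive_entries_contents (n d : ℕ) (lam mu : Fin n → ℕ)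
    (hlam_strict : ∀ i j : Fin n, i < j → lam j < lam i)
    (hlam_pos : ∀ i : Fin n, 0 < lam i)
    (hmu_mono : ∀ i j : Fin n, i < j → mu j ≤ mu i)
    (hmu_strict : ∀ i j : Fin n, i < j → mu i = mu j → mu j = 0)
    (hsub : ∀ i : Fin n, mu i ≤ lam i)
    (T : Cell n lam mu → Fin d)
    (hT_bij : Function.Bijective T)
    (hT_row : ∀ c c' : Cell n lam mu, c.1.1 = c'.1.1 → c.1.2 < c'.1.2 → T c < T c')
    (hT_col : ∀ c c' : Cell n lam mu, c.1.2 = c'.1.2 → c.1.1 < c'.1.1 → T c < T c')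
    (c c' : Cell n lam mu) (hcons : (T c' : ℕ) = (T c : ℕ) + 1) :
    content c' ≠ content c ∨
      (content c = 0 ∧ content c' = 0 ∧ (c'.1.1 : ℕ) = (c.1.1 : ℕ) + 1) := by
  left
  intro h
  have h1 := c.2.1
  have h2 := c'.2.1
  have hk : (c'.1.2 : ℕ) - (c'.1.1 : ℕ) = c.1.2 - (c.1.1 : ℕ) := h
  rcases Nat.lt_trichotomy (c.1.1 : ℕ) (c'.1.1 : ℕ) with hlt | heq | hgt
  · obtain ⟨t, ht⟩ : ∃ t : ℕ, (c'.1.1 : ℕ) = (c.1.1 : ℕ) + (t + 1) :=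
      ⟨(c'.1.1 : ℕ) - (c.1.1 : ℕ) - 1, by omega⟩
    have := diag_chain hlam_strict hmu_mono T hT_row hT_col t c c' ht hk
    omega
  · -- same row, hence same cell, contradiction with `hcons`
    have hj : c.1.2 = c'.1.2 := by omega
    have hcc : c = c' := by
      apply Subtype.ext
      apply Prod.ext
      · exact Fin.ext heq
      · exact hj
    rw [hcc] at hcons
    omega
  · obtain ⟨t, ht⟩ : ∃ t : ℕ, (c.1.1 : ℕ) = (c'.1.1 : ℕ) + (t + 1) :=
      ⟨(c.1.1 : ℕ) - (c'.1.1 : ℕ) - 1, by omega⟩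
    have := diag_chain hlam_strict hmu_mono T hT_row hT_col t c' c ht (by omega)
    omega
end
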